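/- arXiv:2010.05165 — 2 statements merged into one kernel-verified Lean document; each statement's English description precedes it below -/
import Mathlib

section
/- The Thue–Morse sequence is not built from any finite word of even length: there is no word v over {0,1} of even length, starting and ending with 0, and a sequence of natural numbers (a_i) such that M = v 1^{a_1} v 1^{a_2} v ⋯. -/
/-- A block of `a` ones. -/
def ones (a : ℕ) : List Bool := List.replicate a true

/-- Words over {0,1} that begin and end with 0 (false = 0, true = 1). -/
def InF (v : List Bool) : Prop := v.head? = some false ∧ v.getLast? = some false

/-- `w` is a prefix of the infinite word `V`. -/
def PrefixOf (w : List Bool) (V : ℕ → Bool) : Prop :=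
  ∀ i, i < w.length → w.getD i false = V i

/-- Finite stages `v 1^{a 0} v 1^{a 1} v ⋯ v`. -/
def stage (v : List Bool) (a : ℕ → ℕ) : ℕ → List Bool
  | 0 => v
  | n + 1 => stage v a n ++ ones (a n) ++ v

/-- The infinite word `V` is built from `v`: `V = v 1^{a₁} v 1^{a₂} v ⋯`. -/
def BuiltFrom (V : ℕ → Bool) (v : List Bool) : Prop :=
  ∃ a : ℕ → ℕ, ∀ n, PrefixOf (stage v a n) V

/-- A finite word `w` is built from `v`: `w = v 1^{a₁} v ⋯ v 1^{a_k} v`, `k ≥ 1`. -/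
def FBuiltFrom (w v : List Bool) : Prop :=
  ∃ a : List ℕ, a ≠ [] ∧ w = v ++ (a.map fun n => ones n ++ v).flatten

/-- `A_V`, the set of words in `𝓕` from which `V` is built. -/
def AV (V : ℕ → Bool) : Set (List Bool) := {v | InF v ∧ BuiltFrom V v}

/-- `w` occurs in the infinite word `V` at position `k`. -/
def OccursAt (w : List Bool) (V : ℕ → Bool) (k : ℕ) : Prop :=
  ∀ i, i < w.length → w.getD i false = V (k + i)

/-- `w` is a factor (contiguous subword) of the infinite word `V`. -/
def FactorOfN (w : List Bool) (V : ℕ → Bool) : Prop := ∃ k, OccursAt w V k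

/-- `w` occurs in the bi-infinite word `x` at position `k`. -/
def OccursAtZ (w : List Bool) (x : ℤ → Bool) (k : ℤ) : Prop :=
  ∀ i, i < w.length → w.getD i false = x (k + (i : ℤ))

/-- `w` is a factor of the bi-infinite word `x`. -/
def FactorOfZ (w : List Bool) (x : ℤ → Bool) : Prop := ∃ k, OccursAtZ w x k

/-- The subshift associated to an infinite word `V`. -/
def Subshift (V : ℕ → Bool) : Set (ℤ → Bool) :=
  {x | ∀ w, FactorOfZ w x → FactorOfN w V}

/-- Thue–Morse words: `M 0 = 0`, `M (n+1) = M n ++ complement (M n)`. -/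
def M : ℕ → List Bool
  | 0 => [false]
  | n + 1 => M n ++ (M n).map (fun b => !b)

/-- The Thue–Morse sequence: parity of the number of 1's in binary expansion. -/
def tm (n : ℕ) : Bool := decide (((Nat.digits 2 n).count 1) % 2 = 1)

/-- Rank-two towers for the Thue–Morse sequence. -/
def M2 : ℕ → List Bool × List Bool
  | 0 => ([false], [false])
  | n + 1 =>
    if n % 2 = 1 then ((M2 n).1 ++ [true] ++ (M2 n).2, (M2 n).2 ++ [true] ++ (M2 n).1)
    else ((M2 n).1 ++ [true, true] ++ (M2 n).2, (M2 n).2 ++ (M2 n).1)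

/-! If `tm` were built from `v` with `|v| = 2n`, then `v = tm[0, 2n)` ends with `0` at an odd index,
so it is not alternating. A prefix of the Thue–Morse word occurring at an odd position is alternating,
because the letter pairs `tm (2k), tm (2k + 1)` are complementary; hence all copies of `v` start at even
positions and all gaps of ones have even length. As `tm (2m) = tm m`, reading even positions only shows
that `tm` is built in the same way from its prefix of length `n`, which ends with `1`. For odd `n` this
forces an odd first gap and so a factor `11` at an even position; for even `n ≥ 4` it forces all gaps
to vanish, making `tm` periodic, which it is not. The case `|v| = 4` is checked by hand. -/

def blockStart (L : ℕ) (a : ℕ → ℕ) : ℕ → ℕ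
  | 0 => 0
  | j + 1 => blockStart L a j + L + a j

/-- `V = u 1^{a 0} u 1^{a 1} u ⋯`, where `u` is the prefix of `V` of length `L`. -/
def IsPrefixTiling (V : ℕ → Bool) (L : ℕ) (a : ℕ → ℕ) : Prop :=
  ∀ j, (∀ i < L, V (blockStart L a j + i) = V i) ∧ ∀ k < a j, V (blockStart L a j + L + k) = true

theorem length_stage (v : List Bool) (a : ℕ → ℕ) (j : ℕ) :
    (stage v a j).length = blockStart v.length a j + v.length := by
  induction j with
  | zero => simp [stage, blockStart]
  | succ j ih => simp [stage, blockStart, ih, ones]; omega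

theorem getD_stage_blockStart_add (v : List Bool) (a : ℕ → ℕ) (j : ℕ) {i : ℕ} :
    (stage v a j).getD (blockStart v.length a j + i) false = v.getD i false := by
  cases j with
  | zero => simp [stage, blockStart]
  | succ j =>
    rw [stage, List.getD_append_right _ _ _ _ (by simp [length_stage, ones, blockStart])]
    simp [length_stage, ones, blockStart]

theorem getD_stage_succ_gap (v : List Bool) (a : ℕ → ℕ) (j : ℕ) {k : ℕ} (hk : k < a j) :
    (stage v a (j + 1)).getD (blockStart v.length a j + v.length + k) false = true := by
  rw [stage, List.getD_append _ _ _ _ (by simp [length_stage, ones]; omega),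
    List.getD_append_right _ _ _ _ (by simp [length_stage]), length_stage]
  simp [ones, hk]

theorem isPrefixTiling_of_prefixOf_stage {V : ℕ → Bool} {v : List Bool} {a : ℕ → ℕ}
    (h : ∀ n, PrefixOf (stage v a n) V) : IsPrefixTiling V v.length a := by
  refine fun j => ⟨fun i hi => ?_, fun k hk => ?_⟩
  · rw [← h j _ (by simp [length_stage, hi]), getD_stage_blockStart_add]
    exact h 0 i hi
  · rw [← h (j + 1) _ (by simp [length_stage, blockStart]; omega), getD_stage_succ_gap v a j hk]

theorem blockStart_zero (L j : ℕ) : blockStart L (fun _ => 0) j = j * L := by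
  induction j with
  | zero => simp [blockStart]
  | succ j ih => simp [blockStart, ih]; ring

theorem blockStart_two_mul {n : ℕ} {a : ℕ → ℕ} (ha : ∀ j, Even (a j)) (j : ℕ) :
    blockStart (2 * n) a j = 2 * blockStart n (fun j => a j / 2) j := by
  induction j with
  | zero => simp [blockStart]
  | succ j ih => have := Nat.even_iff.mp (ha j); simp only [blockStart, ih]; omega

theorem IsPrefixTiling.periodic {V : ℕ → Bool} {L : ℕ} (h : IsPrefixTiling V L fun _ => 0) :
    Function.Periodic V L := by
  rcases L.eq_zero_or_pos with rfl | hL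
  · exact fun _ => rfl
  have hmod : ∀ m, V m = V (m % L) := fun m => by
    simpa [blockStart_zero, Nat.mul_comm, Nat.div_add_mod] using
      (h (m / L)).1 (m % L) (Nat.mod_lt _ hL)
  intro m
  rw [hmod (m + L), hmod m, Nat.add_mod_right]

theorem tm_zero : tm 0 = false := by decide

theorem tm_two_mul (n : ℕ) : tm (2 * n) = tm n := by
  rcases n.eq_zero_or_pos with rfl | hn
  · rfl
  · rw [tm, Nat.digits_def' (by norm_num) (by omega)]
    simp [tm]

theorem tm_two_mul_add_one (n : ℕ) : tm (2 * n + 1) = !tm n := by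
  rw [tm, Nat.digits_def' (by norm_num) (by omega), tm]
  rw [show (2 * n + 1) % 2 = 1 by omega, show (2 * n + 1) / 2 = n by omega, List.count_cons_self]
  rcases Nat.mod_two_eq_zero_or_one ((Nat.digits 2 n).count 1) with h | h <;> simp [Nat.add_mod, h]

theorem tm_two_mul_add_one_eq_not (n : ℕ) : tm (2 * n + 1) = !tm (2 * n) := by
  rw [tm_two_mul_add_one, tm_two_mul]

theorem tm_two_mul_ne (n : ℕ) : tm (2 * n) ≠ tm (2 * n + 1) := by
  rw [tm_two_mul_add_one_eq_not]; cases tm (2 * n) <;> decide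

theorem tm_not_periodic {p : ℕ} (hp : 0 < p) : ¬ Function.Periodic tm p := by
  induction p using Nat.strong_induction_on with
  | _ p ih =>
  intro h
  obtain ⟨q, rfl | rfl⟩ := Nat.even_or_odd' p
  · refine ih q (by omega) (by omega) fun m => ?_
    rw [← tm_two_mul, mul_add, h, tm_two_mul]
  · -- comparing even positions: `tm (2k) = tm (2k + 2q + 1) = !tm (k + q)`
    have hshift : ∀ k, tm k = !tm (k + q) := fun k => by
      rw [← tm_two_mul, ← h, show 2 * k + (2 * q + 1) = 2 * (k + q) + 1 by ring, tm_two_mul_add_one]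
    have h2q : tm (2 * q) = tm 0 := by
      rw [hshift 0, zero_add, hshift q, ← two_mul, Bool.not_not]
    exact tm_two_mul_ne q (by rw [h2q, ← h 0, zero_add])

theorem tm_eq_decide_of_occurs_odd {t m : ℕ} (ht : t % 2 = 1) (h : ∀ i < m, tm (t + i) = tm i) :
    ∀ i < m, tm i = decide (i % 2 = 1) := by
  have hstep : ∀ i, i + 1 < m → tm (i + 1) = !tm i := by
    intro i hi
    obtain ⟨k, hk⟩ | ⟨k, hk⟩ : (∃ k, i = 2 * k) ∨ ∃ k, t + i = 2 * k := by
      rcases Nat.mod_two_eq_zero_or_one i with h | h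
      · exact .inl ⟨i / 2, by omega⟩
      · exact .inr ⟨(t + i) / 2, by omega⟩
    · rw [hk, tm_two_mul_add_one_eq_not]
    · rw [← h i (by omega), ← h (i + 1) hi, ← add_assoc, hk, tm_two_mul_add_one_eq_not]
  intro i hi
  induction i with
  | zero => exact tm_zero
  | succ i ih =>
    rw [hstep i hi, ih (by omega)]
    rcases Nat.mod_two_eq_zero_or_one i with h | h <;> simp [h, Nat.succ_mod_two_eq_one_iff]

theorem IsPrefixTiling.even_blockStart {L i : ℕ} {a : ℕ → ℕ} (h : IsPrefixTiling tm L a)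
    (hi : i < L) (hne : tm i ≠ decide (i % 2 = 1)) (j : ℕ) : Even (blockStart L a j) := by
  by_contra hodd
  exact hne <| tm_eq_decide_of_occurs_odd (Nat.odd_iff.mp (Nat.not_even_iff_odd.mp hodd)) (h j).1 i hi

theorem IsPrefixTiling.half {n : ℕ} {a : ℕ → ℕ} (h : IsPrefixTiling tm (2 * n) a)
    (heven : ∀ j, Even (blockStart (2 * n) a j)) : IsPrefixTiling tm n fun j => a j / 2 := by
  have ha : ∀ j, Even (a j) := fun j => by
    have h0 := Nat.even_iff.mp (heven j); have h1 := Nat.even_iff.mp (heven (j + 1))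
    simp only [blockStart] at h1
    exact Nat.even_iff.mpr (by omega)
  refine fun j => ⟨fun i hi => ?_, fun k hk => ?_⟩
  · rw [← tm_two_mul, mul_add, ← blockStart_two_mul ha, (h j).1 _ (by omega), tm_two_mul]
  · rw [← tm_two_mul, mul_add, mul_add, ← blockStart_two_mul ha]
    exact (h j).2 _ (by have := Nat.even_iff.mp (ha j); simp only at hk; omega)

theorem not_isPrefixTiling_tm_four (a : ℕ → ℕ) : ¬ IsPrefixTiling tm 4 a := by
  intro h
  have hocc := (h 1).1
  simp only [blockStart, zero_add] at hocc
  rcases Nat.lt_or_ge (a 0) 2 with ha | ha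
  · interval_cases h0 : a 0
    · exact absurd (hocc 0 (by omega)) (by decide)
    · exact absurd (hocc 1 (by omega)) (by decide)
  · exact absurd ((h 0).2 1 ha) (by simp only [blockStart]; decide)

theorem not_isPrefixTiling_tm_of_odd {n : ℕ} (hn : Odd n) (hlast : tm (n - 1) = true)
    (b : ℕ → ℕ) : ¬ IsPrefixTiling tm n b := by
  intro h
  obtain ⟨k, rfl⟩ := hn
  have heven := h.even_blockStart (i := 2 * k) (by omega)
    (by simpa [show 2 * k + 1 - 1 = 2 * k by omega] using hlast) 1
  simp only [blockStart, zero_add] at heven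
  have hgap : tm (2 * k + 1) = true := by
    simpa [blockStart] using (h 0).2 0 (by have := Nat.even_iff.mp heven; omega)
  exact tm_two_mul_ne k (by rw [hgap, ← hlast]; rfl)

theorem not_isPrefixTiling_tm_of_even {n : ℕ} (hn : Even n) (h4 : 4 ≤ n)
    (b : ℕ → ℕ) : ¬ IsPrefixTiling tm n b := by
  intro h
  have heven := h.even_blockStart (i := 2) (by omega) (by decide)
  have hb : b = fun _ => 0 := by
    funext j
    have h0 := Nat.even_iff.mp (heven j); have h1 := Nat.even_iff.mp (heven (j + 1))
    have hn' := Nat.even_iff.mp hn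
    simp only [blockStart] at h1
    by_contra hbj
    -- an even gap of length `≥ 2` starts at an even position, giving `tm (2k) = tm (2k + 1) = 1`
    obtain ⟨k, hk⟩ : ∃ k, blockStart n b j + n = 2 * k := ⟨(blockStart n b j + n) / 2, by omega⟩
    have e0 := (h j).2 0 (by omega)
    have e1 := (h j).2 1 (by omega)
    rw [add_zero, hk] at e0
    rw [hk] at e1
    exact tm_two_mul_ne k (e0.trans e1.symm)
  subst hb
  exact tm_not_periodic (by omega) h.periodic

theorem stmt4 : ¬ ∃ v : List Bool, InF v ∧ v.length % 2 = 0 ∧ BuiltFrom tm v := by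
  rintro ⟨v, ⟨-, hlast⟩, hlen, a, ha⟩
  have htile := isPrefixTiling_of_prefixOf_stage ha
  have hpos : 0 < v.length := List.length_pos_iff.mpr (by rintro rfl; simp at hlast)
  have htm_last : tm (v.length - 1) = false := by
    rw [← ha 0 _ (by simp [stage]; omega), stage, List.getD_eq_getElem?_getD,
      ← List.getLast?_eq_getElem?, hlast]
    rfl
  obtain ⟨n, hn⟩ : ∃ n, v.length = 2 * n := ⟨v.length / 2, by omega⟩
  rw [hn] at htile htm_last
  have htm_half : tm (n - 1) = true := by
    have := tm_two_mul_add_one (n - 1)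
    rw [show 2 * (n - 1) + 1 = 2 * n - 1 by omega, htm_last] at this
    simpa using this
  obtain rfl | hn3 : n = 2 ∨ 3 ≤ n := by
    have : n ≠ 1 := by rintro rfl; exact absurd htm_half (by decide)
    omega
  · exact not_isPrefixTiling_tm_four a htile
  have hhalf := htile.half (htile.even_blockStart (i := 2 * n - 1) (by omega)
    (by rw [htm_last]; simp; omega))
  rcases Nat.even_or_odd n with he | ho
  · exact not_isPrefixTiling_tm_of_even he (by rcases he with ⟨k, hk⟩; omega) _ hhalf
  · exact not_isPrefixTiling_tm_of_odd ho htm_half _ hhalf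
end

section
/- For infinite binary words V and W with associated subshifts X_V and X_W, one has X_V ⊆ X_W if and only if every finite word occurring infinitely often in V also occurs infinitely often in W. -/
/-
A point `x` of `X_V` in which `w` occurs has arbitrarily long factors ending with that occurrence
of `w`; each of them occurs in `V`, so `w` occurs in `V` beyond any given position. Conversely, if
`w` occurs in `V` at infinitely many positions `k₀ < k₁ < ⋯`, a cluster point of the shifted words
`i ↦ V (kₙ + i)` in the compact space `ℤ → Bool` is a point of `X_V` containing `w` at `0`, hence a
point of `X_W`, so `w` occurs infinitely often in `W` by the first argument.
-/

open Filter

lemma MapClusterPt.frequently_forall_mem_finset_eq {ι β α : Type*} [TopologicalSpace α]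
    [DiscreteTopology α] {l : Filter ι} {y : ι → β → α} {x : β → α} (hx : MapClusterPt x l y)
    (s : Finset β) : ∃ᶠ n in l, ∀ j ∈ s, y n j = x j :=
  hx.frequently <| (s.eventually_all).2 fun j _ =>
    tendsto_pure.1 (nhds_discrete α ▸ (continuous_apply j).tendsto x)

def window (x : ℤ → Bool) (a : ℤ) (n : ℕ) : List Bool :=
  List.ofFn fun i : Fin n => x (a + i)

lemma getD_window {x : ℤ → Bool} {a : ℤ} {n j : ℕ} (h : j < n) :
    (window x a n).getD j false = x (a + j) := by
  simp [window, List.getD_eq_getElem?_getD, h]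

lemma occursAtZ_window (x : ℤ → Bool) (a : ℤ) (n : ℕ) : OccursAtZ (window x a n) x a :=
  fun _ hi => getD_window (by simpa [window] using hi)

lemma OccursAtZ.occursAt_of_occursAt_window {w : List Bool} {x : ℤ → Bool} {V : ℕ → Bool}
    {a : ℤ} {m p : ℕ} (hw : OccursAtZ w x a)
    (hp : OccursAt (window x (a - m) (m + w.length)) V p) : OccursAt w V (p + m) := by
  intro i hi
  have hpi := hp (m + i) (by simp [window, hi])
  rw [getD_window (by omega)] at hpi
  rw [hw i hi, add_assoc, ← hpi]
  congr 1
  push_cast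
  ring

lemma infinite_setOf_occursAt_of_mem_subshift {V : ℕ → Bool} {x : ℤ → Bool} {w : List Bool}
    (hx : x ∈ Subshift V) (hw : FactorOfZ w x) : {k | OccursAt w V k}.Infinite := by
  obtain ⟨a, ha⟩ := hw
  refine Set.infinite_of_forall_exists_gt fun N => ?_
  obtain ⟨p, hp⟩ := hx _ ⟨_, occursAtZ_window x (a - (N + 1 : ℕ)) (N + 1 + w.length)⟩
  exact ⟨p + (N + 1), ha.occursAt_of_occursAt_window hp, by omega⟩

lemma exists_mem_subshift_occursAtZ_zero {V : ℕ → Bool} {w : List Bool}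
    (hw : {k | OccursAt w V k}.Infinite) : ∃ x ∈ Subshift V, OccursAtZ w x 0 := by
  choose k hk_occ hk_gt using hw.exists_gt
  let y : ℕ → ℤ → Bool := fun n i => V (k n + i).toNat
  obtain ⟨x, hx⟩ := exists_clusterPt_of_compactSpace (map y atTop)
  have agree (a : ℤ) (len N : ℕ) : ∃ n ≥ N, ∀ j < len, y n (a + j) = x (a + j) := by
    obtain ⟨n, hn, hyx⟩ := (MapClusterPt.frequently_forall_mem_finset_eq hx
      (Finset.Ico a (a + len))).forall_exists_of_atTop N
    exact ⟨n, hn, fun j hj => hyx _ (Finset.mem_Ico.2 ⟨by omega, by omega⟩)⟩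
  refine ⟨x, fun u ⟨a, ha⟩ => ?_, fun i hi => ?_⟩
  -- `n ≥ |a|` and `k n > n` keep `k n + a` nonnegative, so `toNat` loses nothing.
  · obtain ⟨n, hn, hyx⟩ := agree a u.length a.natAbs
    refine ⟨(k n + a).toNat, fun i hi => ?_⟩
    rw [ha i hi, ← hyx i hi]
    simp only [y]
    congr 1
    have := hk_gt n
    omega
  · obtain ⟨n, -, hyx⟩ := agree 0 w.length 0
    rw [← hyx i hi, hk_occ n i hi]
    simp only [y]
    congr 1
    omega

theorem stmt13 (V W : ℕ → Bool) :
    Subshift V ⊆ Subshift W ↔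
      ∀ w : List Bool, {k | OccursAt w V k}.Infinite → {k | OccursAt w W k}.Infinite := by
  constructor
  · intro hsub w hw
    obtain ⟨x, hxV, hwx⟩ := exists_mem_subshift_occursAtZ_zero hw
    exact infinite_setOf_occursAt_of_mem_subshift (hsub hxV) ⟨0, hwx⟩
  · intro h x hxV u hu
    exact (h u (infinite_setOf_occursAt_of_mem_subshift hxV hu)).nonempty
end
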